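/- Let l < r be extended reals, let c : (l,r) → ℝ be continuous, and let λ, κ ∈ ℝ. Suppose h : (l,r) → (0,∞) is C² with (1/2)h'' − c·h = λh on (l,r), g : (l,r) → ℝ is C² with (1/2)g'' − c·g = κg on (l,r), and f : (l,r) → ℝ is C¹. Define f̃(x) := f'(x) − (h'(x)/h(x)) f(x) and g̃(x) := g'(x) − (h'(x)/h(x)) g(x). Then for all x ∈ (l,r), f̃(x) g̃(x) = (d/dx)(f(x) g̃(x)) + 2(λ − κ) f(x) g(x). -/

import Mathlib

open Real

/-- The open interval `(l, r)` of reals, for extended-real endpoints. -/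
def erIoo (l r : EReal) : Set ℝ := {x : ℝ | l < (x : EReal) ∧ (x : EReal) < r}

theorem stmt16 (l r : EReal) (hlr : l < r) (c : ℝ → ℝ) (lam κ : ℝ) (h g f : ℝ → ℝ)
    (hc : ∀ x ∈ erIoo l r, ContinuousAt c x)
    (hhpos : ∀ x ∈ erIoo l r, 0 < h x)
    (hhC2 : ∀ x ∈ erIoo l r, ContDiffAt ℝ 2 h x)
    (hheig : ∀ x ∈ erIoo l r,
      (1 / 2) * deriv (deriv h) x - c x * h x = lam * h x)
    (hgC2 : ∀ x ∈ erIoo l r, ContDiffAt ℝ 2 g x)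
    (hgeig : ∀ x ∈ erIoo l r,
      (1 / 2) * deriv (deriv g) x - c x * g x = κ * g x)
    (hfC1 : ∀ x ∈ erIoo l r, ContDiffAt ℝ 1 f x) :
    ∀ x ∈ erIoo l r,
      (deriv f x - (deriv h x / h x) * f x) *
          (deriv g x - (deriv h x / h x) * g x) =
        deriv (fun y => f y * (deriv g y - (deriv h y / h y) * g y)) x +
          2 * (lam - κ) * f x * g x := by

  intro x hx
  have hSopen : IsOpen (erIoo l r) := by
    have : erIoo l r = (fun x : ℝ => (x : EReal)) ⁻¹' (Set.Ioo l r) := rfl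
    rw [this]
    exact isOpen_Ioo.preimage continuous_coe_real_ereal
  have hnb : erIoo l r ∈ nhds x := hSopen.mem_nhds hx
  have hgC2' : ContDiffOn ℝ 2 g (erIoo l r) := fun y hy => (hgC2 y hy).contDiffWithinAt
  have hhC2' : ContDiffOn ℝ 2 h (erIoo l r) := fun y hy => (hhC2 y hy).contDiffWithinAt
  have hg' : ContDiffOn ℝ 1 (deriv g) (erIoo l r) :=
    hgC2'.deriv_of_isOpen hSopen (by norm_num)
  have hh' : ContDiffOn ℝ 1 (deriv h) (erIoo l r) :=
    hhC2'.deriv_of_isOpen hSopen (by norm_num)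
  have dgg : DifferentiableAt ℝ (deriv g) x :=
    ((hg' x hx).contDiffAt hnb).differentiableAt one_ne_zero
  have dhh : DifferentiableAt ℝ (deriv h) x :=
    ((hh' x hx).contDiffAt hnb).differentiableAt one_ne_zero
  have dg : DifferentiableAt ℝ g x := (hgC2 x hx).differentiableAt (by norm_num)
  have dh : DifferentiableAt ℝ h x := (hhC2 x hx).differentiableAt (by norm_num)
  have df : DifferentiableAt ℝ f x := (hfC1 x hx).differentiableAt one_ne_zero
  have hne : h x ≠ 0 := (hhpos x hx).ne'
  have dq : DifferentiableAt ℝ (fun y => deriv h y / h y) x := dhh.div dh hne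
  have dG : DifferentiableAt ℝ (fun y => deriv g y - deriv h y / h y * g y) x :=
    dgg.sub (dq.mul dg)
  have hderiv : deriv (fun y => f y * (deriv g y - deriv h y / h y * g y)) x =
      deriv f x * (deriv g x - deriv h x / h x * g x) +
      f x * (deriv (deriv g) x -
        ((deriv (deriv h) x * h x - deriv h x * deriv h x) / (h x) ^ 2 * g x
          + deriv h x / h x * deriv g x)) := by
    rw [deriv_fun_mul df dG, deriv_fun_sub (g := fun y => deriv h y / h y * g y) dgg (dq.mul dg), deriv_fun_mul dq dg, deriv_fun_div dhh dh hne]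
  rw [hderiv]
  have e1 : deriv (deriv g) x = 2 * (κ * g x + c x * g x) := by
    have := hgeig x hx; linarith
  have e2 : deriv (deriv h) x = 2 * (lam * h x + c x * h x) := by
    have := hheig x hx; linarith
  rw [e1, e2]
  field_simp
  ring
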